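/- Let d ≥ 1 and let X be a real spherical t-design on S^{2d−1} consisting of N distinct points. If t = 2k+1 is odd, then N ≥ 2·binom(2d+k−1, 2d−1); if t = 2k is even, then N ≥ binom(2d+k−1, 2d−1) + binom(2d+k−2, 2d−1). -/

import Mathlib

noncomputable section
open MeasureTheory Metric MvPolynomial ENNReal

/-- The real unit sphere `S^{n-1} ⊆ ℝ^n`. -/
abbrev RSph (n : ℕ) : Type := Metric.sphere (0 : EuclideanSpace ℝ (Fin n)) 1

def rsMap {n : ℕ} (f : EuclideanSpace ℝ (Fin n) ≃ₗᵢ[ℝ] EuclideanSpace ℝ (Fin n))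
    (x : RSph n) : RSph n :=
  ⟨f x, by
    have hx := x.2
    simp only [mem_sphere_iff_norm, sub_zero] at hx ⊢
    simp [hx]⟩

/-- `σ` is the uniform (rotation invariant) probability measure on the real unit sphere. -/
def IsUniformR {n : ℕ} (σm : Measure (RSph n)) : Prop :=
  IsProbabilityMeasure σm ∧
    ∀ f : EuclideanSpace ℝ (Fin n) ≃ₗᵢ[ℝ] EuclideanSpace ℝ (Fin n),
      Measure.map (rsMap f) σm = σm

def evalR {n : ℕ} (p : MvPolynomial (Fin n) ℝ) (x : RSph n) : ℝ :=
  MvPolynomial.eval (fun j => (x : EuclideanSpace ℝ (Fin n)) j) p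

/-- A finite family of points of the real sphere is a real spherical `t`-design. -/
def IsRealDesign {n : ℕ} (σm : Measure (RSph n)) (t : ℕ)
    {ι : Type} [Fintype ι] (x : ι → RSph n) : Prop :=
  ∀ p : MvPolynomial (Fin n) ℝ, p.totalDegree ≤ t →
    (Fintype.card ι : ℝ)⁻¹ * ∑ i, evalR p (x i) = ∫ y, evalR p y ∂σm

/-! The polynomial method of Delsarte, Goethals and Seidel. If a polynomial `p` with
`2 * deg p ≤ t` vanishes on a `t`-design then `∫ p² = 0`, so `p` vanishes on the whole sphere,
because the rotation-invariant measure charges every open set. Evaluation on the design is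
therefore injective on `Hom_k ⊕ Hom_(k-1)` when `t = 2k` (the two summands are separated by their
parity under `y ↦ -y`), and on `Hom_k ⊕ L • Hom_k` when `t = 2k+1`, where `L` is a linear form
vanishing at no design point: integrating `(p + L q) p` kills the odd term `L q p`, so `p = 0`,
and then `q` vanishes on the design. Finally `dim Hom_k = binom(n+k-1, k)`. -/

namespace MvPolynomial

theorem IsHomogeneous.eval_smul {σ R : Type*} [Fintype σ] [CommSemiring R]
    {p : MvPolynomial σ R} {m : ℕ} (hp : p.IsHomogeneous m) (c : R) (y : σ → R) :
    eval (c • y) p = c ^ m * eval y p := by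
  rw [eval_eq', eval_eq', Finset.mul_sum]
  refine Finset.sum_congr rfl fun d hd => ?_
  have hdeg : ∑ i, d i = m := by
    rw [← Finsupp.degree_eq_sum, Finsupp.degree_eq_weight_one]
    exact hp (mem_support_iff.mp hd)
  simp only [Pi.smul_apply, smul_eq_mul, mul_pow, Finset.prod_mul_distrib,
    Finset.prod_pow_eq_pow_sum, hdeg]
  ring

theorem finrank_homogeneousSubmodule (σ K : Type*) [Fintype σ] [Field K] (k : ℕ) :
    Module.finrank K (homogeneousSubmodule σ K k) = (Fintype.card σ + k - 1).choose k := by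
  classical
  have hs : {d : σ →₀ ℕ | d.degree = k} =
      ((Finset.univ : Finset σ).finsuppAntidiag k : Set (σ →₀ ℕ)) := by
    ext d; simp [Finsupp.degree_eq_sum]
  rw [homogeneousSubmodule_eq_finsupp_supported, hs]
  refine (Module.finrank_eq_card_basis (basisRestrictSupport K _)).trans ?_
  simp [Finset.card_finsuppAntidiag_nat_eq_choose]

instance (σ R : Type*) [Finite σ] [CommSemiring R] (k : ℕ) :
    Module.Finite R (homogeneousSubmodule σ R k) :=
  Module.Finite.iff_fg.mpr (homogeneousSubmodule_fg σ R k)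

end MvPolynomial

theorem exists_mem_sphere_eq_smul {E : Type*} [NormedAddCommGroup E] [NormedSpace ℝ E]
    [Nontrivial E] (v : E) : ∃ u ∈ sphere (0 : E) 1, ∃ c : ℝ, v = c • u := by
  by_cases hv : v = 0
  · obtain ⟨u, hu⟩ := (NormedSpace.sphere_nonempty (x := (0 : E))).mpr zero_le_one
    exact ⟨u, hu, 0, by simp [hv]⟩
  · exact ⟨‖v‖⁻¹ • v, by simp [norm_smul, hv], ‖v‖, by simp [smul_smul, hv]⟩

section

variable {n : ℕ}

theorem continuous_rsMap
    (f : EuclideanSpace ℝ (Fin n) ≃ₗᵢ[ℝ] EuclideanSpace ℝ (Fin n)) : Continuous (rsMap f) :=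
  (f.continuous.comp continuous_subtype_val).subtype_mk _

theorem continuous_evalR (p : MvPolynomial (Fin n) ℝ) : Continuous (evalR p : RSph n → ℝ) :=
  (continuous_eval p).comp <| continuous_pi fun j =>
    ((PiLp.continuous_apply 2 _ j).comp continuous_subtype_val)

@[simp]
theorem evalR_add (p q : MvPolynomial (Fin n) ℝ) (y : RSph n) :
    evalR (p + q) y = evalR p y + evalR q y :=
  map_add _ p q

@[simp]
theorem evalR_mul (p q : MvPolynomial (Fin n) ℝ) (y : RSph n) :
    evalR (p * q) y = evalR p y * evalR q y :=
  map_mul _ p q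

theorem evalR_neg {p : MvPolynomial (Fin n) ℝ} {m : ℕ} (hp : p.IsHomogeneous m) (y : RSph n) :
    evalR p (-y) = (-1) ^ m * evalR p y := by
  have : (fun j => ((-y : RSph n) : EuclideanSpace ℝ (Fin n)) j) =
      (-1 : ℝ) • fun j => (y : EuclideanSpace ℝ (Fin n)) j := by
    ext j; simp
  rw [evalR, this, hp.eval_smul]
  rfl

theorem exists_rsMap_eq (y z : RSph n) :
    ∃ f : EuclideanSpace ℝ (Fin n) ≃ₗᵢ[ℝ] EuclideanSpace ℝ (Fin n), rsMap f y = z := by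
  have hyz : ‖(y : EuclideanSpace ℝ (Fin n))‖ = ‖(z : EuclideanSpace ℝ (Fin n))‖ := by
    rw [norm_eq_of_mem_sphere, norm_eq_of_mem_sphere]
  exact ⟨_, Subtype.ext (Submodule.reflection_sub hyz)⟩

theorem MvPolynomial.IsHomogeneous.eq_zero_of_forall_evalR_eq_zero [NeZero n]
    {p : MvPolynomial (Fin n) ℝ} {m : ℕ} (hp : p.IsHomogeneous m)
    (h : ∀ y : RSph n, evalR p y = 0) : p = 0 := by
  refine hp.eq_zero_of_forall_eval_eq_zero fun z => ?_
  obtain ⟨u, hu, c, hz⟩ := exists_mem_sphere_eq_smul (WithLp.toLp 2 z)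
  have hz' : z = c • fun j => u j := by
    ext j; simpa using congr($hz j)
  rw [hz', hp.eval_smul]
  exact mul_eq_zero_of_right _ (h ⟨u, hu⟩)

theorem evalR_eq_zero_of_forall_evalR_add_eq_zero {p q : MvPolynomial (Fin n) ℝ}
    {m : ℕ} (hp : p.IsHomogeneous (m + 1)) (hq : q.IsHomogeneous m)
    (h : ∀ y : RSph n, evalR (p + q) y = 0) (y : RSph n) : evalR p y = 0 ∧ evalR q y = 0 := by
  have h₁ := h y
  have h₂ := h (-y)
  rw [evalR_add] at h₁ h₂
  rw [evalR_neg hp, evalR_neg hq, pow_succ] at h₂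
  rcases neg_one_pow_eq_or ℝ m with hm | hm <;> rw [hm] at h₂ <;> constructor <;> linarith

theorem finrank_add_finrank_le_card {V W : Type*} [AddCommGroup V] [Module ℝ V]
    [FiniteDimensional ℝ V] [AddCommGroup W] [Module ℝ W] [FiniteDimensional ℝ W]
    (f : V →ₗ[ℝ] MvPolynomial (Fin n) ℝ) (g : W →ₗ[ℝ] MvPolynomial (Fin n) ℝ)
    {ι : Type*} [Fintype ι] (x : ι → RSph n)
    (h : ∀ v w, (∀ i, evalR (f v + g w) (x i) = 0) → v = 0 ∧ w = 0) :
    Module.finrank ℝ V + Module.finrank ℝ W ≤ Fintype.card ι := by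
  let T : V × W →ₗ[ℝ] ι → ℝ :=
    (LinearMap.pi fun i => (aeval fun j => (x i : EuclideanSpace ℝ (Fin n)) j).toLinearMap).comp
      (f.coprod g)
  have hT : Function.Injective T := by
    refine (injective_iff_map_eq_zero T).mpr fun ⟨v, w⟩ hvw => Prod.ext_iff.mpr ?_
    exact h v w fun i => by simpa [T, evalR] using congr_fun hvw i
  simpa using LinearMap.finrank_le_finrank_of_injective hT

theorem exists_isHomogeneous_one_forall_evalR_ne_zero {ι : Type*} [Finite ι]
    (x : ι → RSph n) :
    ∃ L : MvPolynomial (Fin n) ℝ, L.IsHomogeneous 1 ∧ ∀ i, evalR L (x i) ≠ 0 := by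
  obtain ⟨f, hf⟩ := Module.exists_dual_forall_apply_ne_zero (K := ℝ)
    (fun i => WithLp.ofLp (x i : EuclideanSpace ℝ (Fin n))) fun i => by
      simpa using ne_zero_of_mem_unit_sphere (x i)
  refine ⟨∑ j, C (f (Pi.single j 1)) * X j,
    IsHomogeneous.sum _ _ _ fun j _ => isHomogeneous_C_mul_X _ j, fun i => ?_⟩
  convert hf i using 1
  rw [f.pi_apply_eq_sum_univ]
  simp only [evalR, map_sum, map_mul, eval_C, eval_X]
  refine Finset.sum_congr rfl fun j _ => ?_
  rw [smul_eq_mul, mul_comm]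
  congr 2
  ext k
  simp [Pi.single_apply, eq_comm]

namespace IsUniformR

variable {σm : Measure (RSph n)}

theorem isOpenPosMeasure (hσ : IsUniformR σm) : σm.IsOpenPosMeasure := by
  have := hσ.1
  refine ⟨fun U hU ⟨z, hz⟩ hU₀ => ?_⟩
  have huniv : σm Set.univ = 0 := measure_null_of_locally_null _ fun y _ => by
    obtain ⟨f, hf⟩ := exists_rsMap_eq y z
    refine ⟨rsMap f ⁻¹' U, mem_nhdsWithin_of_mem_nhds
      ((hU.preimage (continuous_rsMap f)).mem_nhds (by rwa [Set.mem_preimage, hf])), ?_⟩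
    rw [← Measure.map_apply (continuous_rsMap f).measurable hU.measurableSet, hσ.2 f, hU₀]
  simp at huniv

theorem integrable_evalR (hσ : IsUniformR σm) (p : MvPolynomial (Fin n) ℝ) :
    Integrable (evalR p) σm :=
  have := hσ.1
  (continuous_evalR p).integrable_of_hasCompactSupport (.of_compactSpace _)

theorem integral_evalR_eq_zero_of_odd (hσ : IsUniformR σm) {p : MvPolynomial (Fin n) ℝ}
    {m : ℕ} (hp : p.IsHomogeneous m) (hm : Odd m) : ∫ y, evalR p y ∂σm = 0 := by
  let f : EuclideanSpace ℝ (Fin n) ≃ₗᵢ[ℝ] EuclideanSpace ℝ (Fin n) :=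
    LinearIsometryEquiv.neg ℝ
  have hinv : ∫ y, evalR p (rsMap f y) ∂σm = ∫ y, evalR p y ∂σm := by
    rw [← integral_map (continuous_rsMap f).aemeasurable
      (continuous_evalR p).aestronglyMeasurable, hσ.2 f]
  have hodd : ∀ y, evalR p (rsMap f y) = -evalR p y := fun y => by
    rw [show rsMap f y = -y from rfl, evalR_neg hp, hm.neg_one_pow, neg_one_mul]
  simp_rw [hodd, integral_neg] at hinv
  linarith

theorem evalR_eq_zero_of_integral_mul_self (hσ : IsUniformR σm) {p : MvPolynomial (Fin n) ℝ}
    (h : ∫ y, evalR (p * p) y ∂σm = 0) (y : RSph n) : evalR p y = 0 := by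
  have := hσ.isOpenPosMeasure
  have hnonneg : 0 ≤ evalR (p * p) := fun y => by simp [mul_self_nonneg]
  have hae := (integral_eq_zero_iff_of_nonneg hnonneg (hσ.integrable_evalR _)).mp h
  have hzero : evalR (p * p) = 0 :=
    (continuous_evalR (p * p)).ae_eq_iff_eq σm continuous_const |>.mp hae
  simpa using congr_fun hzero y

end IsUniformR

namespace IsRealDesign

variable {σm : Measure (RSph n)} {t : ℕ} {ι : Type} [Fintype ι] {x : ι → RSph n}

theorem card_pos [IsProbabilityMeasure σm] (hx : IsRealDesign σm t x) : 0 < Fintype.card ι := by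
  by_contra! h
  simpa [Nat.le_zero.mp h, evalR] using hx 1 (by simp)

theorem integral_evalR_eq_zero (hx : IsRealDesign σm t x) {p : MvPolynomial (Fin n) ℝ}
    (hp : p.totalDegree ≤ t) (h : ∀ i, evalR p (x i) = 0) : ∫ y, evalR p y ∂σm = 0 := by
  simp [← hx p hp, h]

theorem evalR_eq_zero (hσ : IsUniformR σm) (hx : IsRealDesign σm t x)
    {p : MvPolynomial (Fin n) ℝ} (hp : 2 * p.totalDegree ≤ t) (h : ∀ i, evalR p (x i) = 0)
    (y : RSph n) : evalR p y = 0 :=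
  hσ.evalR_eq_zero_of_integral_mul_self
    (hx.integral_evalR_eq_zero ((totalDegree_mul p p).trans (by omega)) fun i => by simp [h i]) y

variable [NeZero n]

theorem eq_zero_of_evalR_add_eq_zero (hσ : IsUniformR σm) {m : ℕ}
    (hx : IsRealDesign σm (2 * (m + 1)) x) {p q : MvPolynomial (Fin n) ℝ}
    (hp : p.IsHomogeneous (m + 1)) (hq : q.IsHomogeneous m)
    (h : ∀ i, evalR (p + q) (x i) = 0) : p = 0 ∧ q = 0 := by
  have hdeg : (p + q).totalDegree ≤ m + 1 :=
    (totalDegree_add p q).trans (max_le hp.totalDegree_le (hq.totalDegree_le.trans m.le_succ))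
  have hsphere := evalR_eq_zero_of_forall_evalR_add_eq_zero hp hq
    (hx.evalR_eq_zero hσ (by omega) h)
  exact ⟨hp.eq_zero_of_forall_evalR_eq_zero fun y => (hsphere y).1,
    hq.eq_zero_of_forall_evalR_eq_zero fun y => (hsphere y).2⟩

theorem eq_zero_of_evalR_add_mul_eq_zero (hσ : IsUniformR σm) {k : ℕ}
    (hx : IsRealDesign σm (2 * k + 1) x) {L p q : MvPolynomial (Fin n) ℝ}
    (hL : L.IsHomogeneous 1) (hLx : ∀ i, evalR L (x i) ≠ 0)
    (hp : p.IsHomogeneous k) (hq : q.IsHomogeneous k)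
    (h : ∀ i, evalR (p + L * q) (x i) = 0) : p = 0 ∧ q = 0 := by
  have hdeg : (p + L * q).totalDegree ≤ k + 1 := (totalDegree_add _ _).trans <|
    max_le (hp.totalDegree_le.trans k.le_succ) ((hL.mul hq).totalDegree_le.trans (by omega))
  have hsq : ∫ y, evalR (p * p) y ∂σm = 0 := by
    have hsum := hx.integral_evalR_eq_zero (p := (p + L * q) * p)
      ((totalDegree_mul _ _).trans (by have := hp.totalDegree_le; omega)) fun i => by simp [h i]
    have hodd : ∫ y, evalR (L * q * p) y ∂σm = 0 :=
      hσ.integral_evalR_eq_zero_of_odd ((hL.mul hq).mul hp) ⟨k, by ring⟩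
    simp only [add_mul, evalR_add] at hsum
    rwa [integral_add (hσ.integrable_evalR _) (hσ.integrable_evalR _), hodd, add_zero] at hsum
  have hp₀ : p = 0 :=
    hp.eq_zero_of_forall_evalR_eq_zero (hσ.evalR_eq_zero_of_integral_mul_self hsq)
  subst hp₀
  have hqx : ∀ i, evalR q (x i) = 0 := fun i =>
    (mul_eq_zero.mp (by simpa using h i)).resolve_left (hLx i)
  exact ⟨rfl, hq.eq_zero_of_forall_evalR_eq_zero
    (hx.evalR_eq_zero hσ (by have := hq.totalDegree_le; omega) hqx)⟩

theorem choose_add_choose_le_card (hσ : IsUniformR σm) {m : ℕ}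
    (hx : IsRealDesign σm (2 * (m + 1)) x) :
    (n + m).choose (m + 1) + (n + m - 1).choose m ≤ Fintype.card ι := by
  have key := finrank_add_finrank_le_card (homogeneousSubmodule (Fin n) ℝ (m + 1)).subtype
    (homogeneousSubmodule (Fin n) ℝ m).subtype x fun p q h => by
      obtain ⟨hp, hq⟩ := hx.eq_zero_of_evalR_add_eq_zero hσ p.2 q.2 h
      exact ⟨Subtype.ext hp, Subtype.ext hq⟩
  simpa [finrank_homogeneousSubmodule] using key

theorem two_mul_choose_le_card (hσ : IsUniformR σm) {k : ℕ}
    (hx : IsRealDesign σm (2 * k + 1) x) :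
    2 * (n + k - 1).choose k ≤ Fintype.card ι := by
  obtain ⟨L, hL, hLx⟩ := exists_isHomogeneous_one_forall_evalR_ne_zero x
  let H := homogeneousSubmodule (Fin n) ℝ k
  have key := finrank_add_finrank_le_card H.subtype ((LinearMap.mulLeft ℝ L).comp H.subtype) x
    fun p q h => by
      obtain ⟨hp, hq⟩ := hx.eq_zero_of_evalR_add_mul_eq_zero hσ hL hLx p.2 q.2 h
      exact ⟨Subtype.ext hp, Subtype.ext hq⟩
  simpa [H, finrank_homogeneousSubmodule, two_mul] using key

end IsRealDesign

end

theorem design_point_lower_bound_general (d t N : ℕ) (hd : 1 ≤ d)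
    (σm : Measure (RSph (2 * d))) (hσ : IsUniformR σm)
    (x : Fin N → RSph (2 * d))
    (hdes : IsRealDesign σm t x) :
    ∀ k : ℕ, (t = 2 * k + 1 → 2 * Nat.choose (2 * d + k - 1) (2 * d - 1) ≤ N) ∧
      (t = 2 * k →
        Nat.choose (2 * d + k - 1) (2 * d - 1) + Nat.choose (2 * d + k - 2) (2 * d - 1) ≤ N) := by
  have : NeZero (2 * d) := ⟨by omega⟩
  have hchoose (j : ℕ) : (2 * d + j - 1).choose (2 * d - 1) = (2 * d + j - 1).choose j :=
    Nat.choose_symm_of_eq_add (by omega)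
  intro k
  refine ⟨fun ht => ?_, fun ht => ?_⟩
  · subst ht
    simpa [hchoose] using hdes.two_mul_choose_le_card hσ
  · subst ht
    rcases k with _ | m
    · have := hσ.1
      rw [hchoose, Nat.choose_zero_right, Nat.choose_eq_zero_of_lt (by omega)]
      simpa using Nat.succ_le_of_lt hdes.card_pos
    · rw [hchoose, show 2 * d + (m + 1) - 2 = 2 * d + m - 1 by omega, hchoose]
      simpa using hdes.choose_add_choose_le_card hσ

/-- lower bounds on the number of points of a real spherical `t`-design
on `S^{2d-1}`. -/
theorem design_point_lower_bound (d t N : ℕ) (hd : 1 ≤ d)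
    (σm : Measure (RSph (2 * d))) (hσ : IsUniformR σm)
    (x : Fin N → RSph (2 * d)) (hinj : Function.Injective x)
    (hdes : IsRealDesign σm t x) :
    ∀ k : ℕ, (t = 2 * k + 1 → 2 * Nat.choose (2 * d + k - 1) (2 * d - 1) ≤ N) ∧
      (t = 2 * k →
        Nat.choose (2 * d + k - 1) (2 * d - 1) + Nat.choose (2 * d + k - 2) (2 * d - 1) ≤ N) :=
  design_point_lower_bound_general d t N hd σm hσ x hdes
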